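/- Let (Ω, P) be a probability space, n ∈ ℕ, and let u₁,…,uₙ be nonnegative functions in L¹(Ω). Set Mₖ = (∑_{m=1}^k u_m²)^{1/2}. Suppose v₁,…,vₙ and w₁,…,wₙ are nonnegative integrable functions with E[(M_{k−1}² + vₖ²)^{1/2}] + E[wₖ] ≤ E[Mₖ] for all 1 ≤ k ≤ n. Then E[(∑_{k=1}^n vₖ²)^{1/2}] + ∑_{k=1}^n E[wₖ] ≤ 2 E[(∑_{k=1}^n uₖ²)^{1/2}]. -/

import Mathlib

/-!
Pointwise, concavity of `√` makes the increment of `j ↦ √(Mₙ² + v₁² + ⋯ + v_j²)` at step `k`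
at most `√(M_{k-1}² + v_k²) - M_{k-1}`, because `M_{k-1}² ≤ Mₙ² + v₁² + ⋯ + v_{k-1}²`.
Telescoping gives `√(∑ v_k²) ≤ Mₙ + ∑ₖ (√(M_{k-1}² + v_k²) - M_{k-1})`. Taking expectations, the
hypothesis bounds the `k`-th summand by `E Mₖ - E M_{k-1} - E wₖ`, and the resulting sum
telescopes to `E Mₙ - ∑ E wₖ` since `M₀ = 0`.
-/

open MeasureTheory Finset

namespace Real

theorem sqrt_add_sub_sqrt_le_of_le {a b c : ℝ} (hb : 0 ≤ b) (hc : 0 ≤ c) (hca : c ≤ a) :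
    √(a + b) - √a ≤ √(c + b) - √c := by
  have ha : 0 ≤ a := hc.trans hca
  have hca' : √c ≤ √a := sqrt_le_sqrt hca
  have hcb : √c ≤ √(c + b) := sqrt_le_sqrt (by linarith)
  suffices √(a + b) ≤ √a + (√(c + b) - √c) by linarith
  rw [sqrt_le_left (by linarith [sqrt_nonneg a])]
  nlinarith [sq_sqrt ha, sq_sqrt hc, sq_sqrt (add_nonneg hc hb),
    mul_nonneg (sub_nonneg.2 hca') (sub_nonneg.2 hcb)]

theorem sqrt_sum_sq_le_sum_abs {ι : Type*} (s : Finset ι) (x : ι → ℝ) :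
    √(∑ i ∈ s, x i ^ 2) ≤ ∑ i ∈ s, |x i| := by
  rw [sqrt_le_left (sum_nonneg fun i _ => abs_nonneg (x i))]
  simpa only [sq_abs] using sum_sq_le_sq_sum_of_nonneg fun i _ => abs_nonneg (x i)

end Real

theorem Finset.sum_Icc_one_sub_pred {G : Type*} [AddCommGroup G] (f : ℕ → G) (n : ℕ) :
    ∑ k ∈ Icc 1 n, (f k - f (k - 1)) = f n - f 0 := by
  induction n with
  | zero => simp
  | succ n ih =>
    rw [sum_Icc_succ_top (Nat.le_add_left 1 n), ih, Nat.add_sub_cancel]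
    abel

theorem sqrt_sum_sq_le_add_sum_sqrt_sub {m : ℕ → ℝ} (hm0 : ∀ k, 0 ≤ m k) (hm : Monotone m)
    (x : ℕ → ℝ) (n : ℕ) :
    √(∑ k ∈ Icc 1 n, x k ^ 2) ≤ m n + ∑ k ∈ Icc 1 n, (√(m (k - 1) ^ 2 + x k ^ 2) - m (k - 1)) := by
  set S : ℕ → ℝ := fun j => √(m n ^ 2 + ∑ k ∈ Icc 1 j, x k ^ 2)
  have hstep : ∀ k ∈ Icc 1 n, S k - S (k - 1) ≤ √(m (k - 1) ^ 2 + x k ^ 2) - m (k - 1) := by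
    intro k hk
    obtain ⟨j, rfl⟩ : ∃ j, k = j + 1 := Nat.exists_eq_add_of_le' (mem_Icc.1 hk).1
    have hjn : m j ^ 2 ≤ m n ^ 2 := pow_le_pow_left₀ (hm0 j) (hm (by grind)) 2
    simp only [S, Nat.add_sub_cancel, sum_Icc_succ_top (Nat.le_add_left 1 j), ← add_assoc]
    have := Real.sqrt_add_sub_sqrt_le_of_le (a := m n ^ 2 + ∑ k ∈ Icc 1 j, x k ^ 2)
      (sq_nonneg (x (j + 1))) (sq_nonneg _)
      (hjn.trans (le_add_of_nonneg_right (sum_nonneg fun k _ => sq_nonneg (x k))))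
    rwa [Real.sqrt_sq (hm0 j)] at this
  calc √(∑ k ∈ Icc 1 n, x k ^ 2)
      ≤ S n := Real.sqrt_le_sqrt (le_add_of_nonneg_left (sq_nonneg _))
    _ = S 0 + ∑ k ∈ Icc 1 n, (S k - S (k - 1)) := by rw [sum_Icc_one_sub_pred]; abel
    _ ≤ m n + ∑ k ∈ Icc 1 n, (√(m (k - 1) ^ 2 + x k ^ 2) - m (k - 1)) := by
      rw [show S 0 = m n by simp [S, Real.sqrt_sq (hm0 n)]]
      exact (add_le_add_iff_left _).2 (sum_le_sum hstep)

namespace MeasureTheory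

variable {Ω : Type*} [MeasurableSpace Ω] {μ : Measure Ω}

theorem Integrable.sqrt_sum_sq {ι : Type*} (s : Finset ι) {f : ι → Ω → ℝ}
    (hf : ∀ i ∈ s, Integrable (f i) μ) : Integrable (fun ω => √(∑ i ∈ s, f i ω ^ 2)) μ := by
  refine (integrable_finsetSum s fun i hi => (hf i hi).abs).mono' ?_
    (Filter.Eventually.of_forall fun ω => ?_)
  · exact Real.continuous_sqrt.comp_aestronglyMeasurable
      (Finset.aestronglyMeasurable_fun_sum s fun i hi => (hf i hi).aestronglyMeasurable.pow 2)
  · rw [Real.norm_of_nonneg (Real.sqrt_nonneg _)]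
    exact Real.sqrt_sum_sq_le_sum_abs s _

theorem Integrable.sqrt_sq_add_sq {f g : Ω → ℝ} (hf : Integrable f μ) (hg : Integrable g μ) :
    Integrable (fun ω => √(f ω ^ 2 + g ω ^ 2)) μ := by
  simpa only [Fin.sum_univ_two, Matrix.cons_val_zero, Matrix.cons_val_one] using
    Integrable.sqrt_sum_sq (f := ![f, g]) univ (by simp [Fin.forall_fin_two, hf, hg])

theorem integral_le_add_sum_sub_of_ae_le {ι : Type*} {s : Finset ι} {f F : Ω → ℝ}
    {g h : ι → Ω → ℝ} (hf : Integrable f μ) (hF : Integrable F μ)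
    (hg : ∀ i ∈ s, Integrable (g i) μ) (hh : ∀ i ∈ s, Integrable (h i) μ)
    (hle : ∀ᵐ ω ∂μ, f ω ≤ F ω + ∑ i ∈ s, (g i ω - h i ω)) :
    ∫ ω, f ω ∂μ ≤ ∫ ω, F ω ∂μ + ∑ i ∈ s, (∫ ω, g i ω ∂μ - ∫ ω, h i ω ∂μ) := by
  have hgh : ∀ i ∈ s, Integrable (fun ω => g i ω - h i ω) μ := fun i hi => (hg i hi).sub (hh i hi)
  calc ∫ ω, f ω ∂μ ≤ ∫ ω, (F ω + ∑ i ∈ s, (g i ω - h i ω)) ∂μ :=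
        integral_mono_ae hf (hF.add (integrable_finsetSum s hgh)) hle
    _ = _ := by
      rw [integral_add hF (integrable_finsetSum s hgh), integral_finsetSum s hgh]
      exact congrArg _ (sum_congr rfl fun i hi => integral_sub (hg i hi) (hh i hi))

end MeasureTheory

theorem stmt_2_general {Ω : Type*} [MeasurableSpace Ω] (μ : Measure Ω)
    (n : ℕ) (u v w : ℕ → Ω → ℝ)
    (hu : ∀ k ∈ Finset.Icc 1 n, Integrable (u k) μ)
    (hv : ∀ k ∈ Finset.Icc 1 n, Integrable (v k) μ)
    (M : ℕ → Ω → ℝ)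
    (hM : ∀ k, ∀ ω, M k ω = Real.sqrt (∑ m ∈ Finset.Icc 1 k, u m ω ^ 2))
    (hyp : ∀ k ∈ Finset.Icc 1 n,
      (∫ ω, Real.sqrt (M (k - 1) ω ^ 2 + v k ω ^ 2) ∂μ) + ∫ ω, w k ω ∂μ
        ≤ ∫ ω, M k ω ∂μ) :
    (∫ ω, Real.sqrt (∑ k ∈ Finset.Icc 1 n, v k ω ^ 2) ∂μ)
      + ∑ k ∈ Finset.Icc 1 n, ∫ ω, w k ω ∂μ
      ≤ 2 * ∫ ω, Real.sqrt (∑ k ∈ Finset.Icc 1 n, u k ω ^ 2) ∂μ := by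
  have hMeq : ∀ k, M k = fun ω => √(∑ m ∈ Icc 1 k, u m ω ^ 2) := fun k => funext (hM k)
  have hMint : ∀ k ≤ n, Integrable (M k) μ := fun k hk =>
    hMeq k ▸ Integrable.sqrt_sum_sq _ fun m hm => hu m (Icc_subset_Icc_right hk hm)
  have hpred : ∀ k ∈ Icc 1 n, k - 1 ≤ n := fun k hk => by grind
  have hM0 : ∀ k ω, 0 ≤ M k ω := fun k ω => hM k ω ▸ Real.sqrt_nonneg _
  have hMmono : ∀ ω, Monotone fun k => M k ω := fun ω j k hjk => by
    simp only [hM]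
    exact Real.sqrt_le_sqrt
      (sum_le_sum_of_subset_of_nonneg (Icc_subset_Icc_right hjk) fun _ _ _ => sq_nonneg _)
  have hMzero : ∫ ω, M 0 ω ∂μ = 0 := by simp [hM]
  calc
    _ ≤ (∫ ω, M n ω ∂μ + ∑ k ∈ Icc 1 n,
          (∫ ω, √(M (k - 1) ω ^ 2 + v k ω ^ 2) ∂μ - ∫ ω, M (k - 1) ω ∂μ))
        + ∑ k ∈ Icc 1 n, ∫ ω, w k ω ∂μ := by
      gcongr
      exact integral_le_add_sum_sub_of_ae_le (Integrable.sqrt_sum_sq _ hv) (hMint n le_rfl)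
        (fun k hk => (hMint _ (hpred k hk)).sqrt_sq_add_sq (hv k hk))
        (fun k hk => hMint _ (hpred k hk))
        (Filter.Eventually.of_forall fun ω =>
          sqrt_sum_sq_le_add_sum_sqrt_sub (hM0 · ω) (hMmono ω) _ n)
    _ ≤ ∫ ω, M n ω ∂μ + ∑ k ∈ Icc 1 n, (∫ ω, M k ω ∂μ - ∫ ω, M (k - 1) ω ∂μ) := by
      rw [add_assoc, ← sum_add_distrib]
      gcongr with k hk
      linarith [hyp k hk]
    _ = 2 * ∫ ω, √(∑ k ∈ Icc 1 n, u k ω ^ 2) ∂μ := by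
      rw [sum_Icc_one_sub_pred (fun k => ∫ ω, M k ω ∂μ), hMzero, hMeq n]
      ring

theorem stmt_2 {Ω : Type*} [MeasurableSpace Ω] (μ : Measure Ω) [IsProbabilityMeasure μ]
    (n : ℕ) (u v w : ℕ → Ω → ℝ)
    (hu : ∀ k ∈ Finset.Icc 1 n, Integrable (u k) μ)
    (hv : ∀ k ∈ Finset.Icc 1 n, Integrable (v k) μ)
    (hw : ∀ k ∈ Finset.Icc 1 n, Integrable (w k) μ)
    (hu0 : ∀ k ∈ Finset.Icc 1 n, ∀ ω, 0 ≤ u k ω)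
    (hv0 : ∀ k ∈ Finset.Icc 1 n, ∀ ω, 0 ≤ v k ω)
    (hw0 : ∀ k ∈ Finset.Icc 1 n, ∀ ω, 0 ≤ w k ω)
    (M : ℕ → Ω → ℝ)
    (hM : ∀ k, ∀ ω, M k ω = Real.sqrt (∑ m ∈ Finset.Icc 1 k, u m ω ^ 2))
    (hyp : ∀ k ∈ Finset.Icc 1 n,
      (∫ ω, Real.sqrt (M (k - 1) ω ^ 2 + v k ω ^ 2) ∂μ) + ∫ ω, w k ω ∂μ
        ≤ ∫ ω, M k ω ∂μ) :
    (∫ ω, Real.sqrt (∑ k ∈ Finset.Icc 1 n, v k ω ^ 2) ∂μ)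
      + ∑ k ∈ Finset.Icc 1 n, ∫ ω, w k ω ∂μ
      ≤ 2 * ∫ ω, Real.sqrt (∑ k ∈ Finset.Icc 1 n, u k ω ^ 2) ∂μ :=
  stmt_2_general μ n u v w hu hv M hM hyp
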